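/- There exists a sequence b : ℕ → ℝ with b_k > 0 for every k ∈ ℕ such that for all real t with |t| < 1: ((t + 1)/(4π)) · (π − arccos((t + 1)/2)) = Σ_{k=0}^∞ b_k t^k, with the series converging absolutely. -/

import Mathlib

/-!
Since `π - arccos u = π / 2 + arcsin u`, the kernel equals
`(t + 1) / 8 + (t + 1) / (4π) · arcsin ((t + 1) / 2)`. Integrating the binomial series of
`(1 - x²)^(-1/2)` term by term shows that `arcsin` has positive coefficients, so the kernel is a
sum `∑ₙ wₙ (t + 1)^(dₙ)` with `wₙ > 0` which converges absolutely for `|t| < 1`. Expanding each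
`(t + 1)^(dₙ)` binomially and regrouping the absolutely convergent double series by powers of `t`
gives coefficients `bₖ = ∑ₙ wₙ (dₙ choose k)`, and `bₖ > 0` because some `dₙ` exceeds `k`.
-/

open Real

section Binomial

lemma hasSum_choose_mul_pow (n : ℕ) (t : ℝ) :
    HasSum (fun k => (n.choose k : ℝ) * t ^ k) ((t + 1) ^ n) := by
  convert hasSum_sum_of_ne_finset_zero (L := .unconditional ℕ) (s := Finset.range (n + 1))
    fun k hk => ?_ using 1
  · simp [add_pow, mul_comm]
  · rw [Finset.mem_range, not_lt] at hk
    simp [Nat.choose_eq_zero_of_lt (Nat.lt_of_succ_le hk)]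

lemma choose_mul_pow_le (n k : ℕ) {r : ℝ} (hr : 0 ≤ r) :
    (n.choose k : ℝ) * r ^ k ≤ (r + 1) ^ n :=
  le_hasSum (hasSum_choose_mul_pow n r) k fun _ _ => by positivity

variable {ι : Type*} {a : ι → ℝ} {d : ι → ℕ}

lemma summable_mul_choose {r : ℝ} (hr : 0 < r) (h : Summable fun i => |a i| * (r + 1) ^ d i)
    (k : ℕ) : Summable fun i => a i * (d i).choose k := by
  refine .of_norm_bounded (h.div_const (r ^ k)) fun i => ?_
  rw [norm_mul, norm_eq_abs, Real.norm_natCast, le_div_iff₀ (by positivity), mul_assoc]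
  exact mul_le_mul_of_nonneg_left (choose_mul_pow_le _ _ hr.le) (abs_nonneg _)

theorem hasSum_tsum_mul_choose_mul_pow {t : ℝ}
    (h : Summable fun i => |a i| * (|t| + 1) ^ d i) :
    Summable (fun k => |(∑' i, a i * (d i).choose k) * t ^ k|) ∧
      HasSum (fun k => (∑' i, a i * (d i).choose k) * t ^ k) (∑' i, a i * (t + 1) ^ d i) := by
  have hrow (c s : ℝ) (n : ℕ) : HasSum (fun k => c * n.choose k * s ^ k) (c * (s + 1) ^ n) := by
    simpa only [mul_assoc] using (hasSum_choose_mul_pow n s).mul_left c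
  have habs (i : ι) (k : ℕ) :
      |a i * (d i).choose k * t ^ k| = |a i| * (d i).choose k * |t| ^ k := by
    simp [abs_mul]
  have hFabs : Summable fun p : ℕ × ι => |a p.2 * (d p.2).choose p.1 * t ^ p.1| := by
    refine (Equiv.prodComm ι ℕ).summable_iff.1 <|
      (summable_prod_of_nonneg fun _ => abs_nonneg _).2 ⟨fun i => ?_, h.congr fun i => ?_⟩
    · simpa only [Equiv.prodComm_apply, Prod.swap, habs] using (hrow |a i| |t| (d i)).summable
    · simp only [Equiv.prodComm_apply, Prod.swap, habs]
      exact (hrow |a i| |t| (d i)).tsum_eq.symm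
  have hF := hFabs.of_abs
  refine ⟨.of_nonneg_of_le (fun _ => abs_nonneg _) (fun k => ?_) hFabs.prod, ?_⟩
  · calc |(∑' i, a i * (d i).choose k) * t ^ k| = |∑' i, a i * (d i).choose k * t ^ k| := by
          rw [tsum_mul_right]
      _ ≤ ∑' i, |a i * (d i).choose k * t ^ k| :=
          norm_tsum_le_tsum_norm (f := fun i => a i * (d i).choose k * t ^ k)
            (hFabs.prod_factor k)
  · have hval : ∑' i, a i * (t + 1) ^ d i = ∑' k, ∑' i, a i * (d i).choose k * t ^ k := by
      rw [← hF.tsum_comm (f := fun k i => a i * (d i).choose k * t ^ k)]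
      exact tsum_congr fun i => ((hrow _ _ _).tsum_eq).symm
    have hsum := hF.prod
    simp only [tsum_mul_right] at hsum
    rw [hsum.hasSum_iff, hval]
    exact tsum_congr fun k => tsum_mul_right.symm

end Binomial

section Arcsin

/-- The coefficients of `(1 - x) ^ (-1/2)`, written as in
`one_div_one_sub_rpow_hasFPowerSeriesOnBall_zero`. -/
noncomputable def invSqrtCoeff (n : ℕ) : ℝ := Ring.choose ((1 / 2 : ℝ) + n - 1) n

noncomputable def arcsinCoeff (n : ℕ) : ℝ := invSqrtCoeff n / (2 * n + 1)

lemma invSqrtCoeff_pos (n : ℕ) : 0 < invSqrtCoeff n := by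
  rw [invSqrtCoeff, Ring.choose_eq_smul, Polynomial.descPochhammer_smeval_eq_ascPochhammer,
    Polynomial.ascPochhammer_smeval_eq_eval, smul_eq_mul]
  have := ascPochhammer_pos n (1 / 2 : ℝ) (by norm_num)
  have := n.factorial_pos
  ring_nf at *
  positivity

lemma arcsinCoeff_pos (n : ℕ) : 0 < arcsinCoeff n :=
  div_pos (invSqrtCoeff_pos n) (by positivity)

theorem hasSum_invSqrtCoeff_mul_pow {x : ℝ} (hx : |x| < 1) :
    HasSum (fun n => invSqrtCoeff n * x ^ (2 * n)) (1 / √(1 - x ^ 2)) := by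
  have hx2 : x ^ 2 ∈ Metric.eball (0 : ℝ) 1 := by
    have : |x| ^ 2 < 1 := pow_lt_one₀ (abs_nonneg x) hx two_ne_zero
    simpa [edist_dist] using this
  have := (one_div_one_sub_rpow_hasFPowerSeriesOnBall_zero (1 / 2)).hasSum hx2
  simp only [FormalMultilinearSeries.ofScalars_apply_eq, smul_eq_mul, zero_add] at this
  simp only [pow_mul, sqrt_eq_rpow]
  exact this

lemma abs_invSqrtCoeff_mul_pow_le {y R : ℝ} (hy : |y| ≤ R) (n : ℕ) :
    |invSqrtCoeff n * y ^ (2 * n)| ≤ invSqrtCoeff n * R ^ (2 * n) := by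
  have := invSqrtCoeff_pos n
  rw [abs_mul, abs_of_pos this, abs_pow]
  gcongr

lemma abs_arcsinCoeff_mul_pow_le {y : ℝ} (hy : |y| ≤ 1) (n : ℕ) :
    |arcsinCoeff n * y ^ (2 * n + 1)| ≤ invSqrtCoeff n * |y| ^ (2 * n) := by
  rw [abs_mul, abs_of_pos (arcsinCoeff_pos n), abs_pow, arcsinCoeff, pow_succ]
  have := invSqrtCoeff_pos n
  have h1 : invSqrtCoeff n / (2 * n + 1) ≤ invSqrtCoeff n :=
    div_le_self this.le (by linarith [n.cast_nonneg (α := ℝ)])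
  have h2 : |y| ^ (2 * n) * |y| ≤ |y| ^ (2 * n) := mul_le_of_le_one_right (by positivity) hy
  gcongr ?_ * ?_

lemma summable_arcsinCoeff_mul_pow {x : ℝ} (hx : |x| < 1) :
    Summable fun n => arcsinCoeff n * x ^ (2 * n + 1) :=
  .of_norm_bounded (hasSum_invSqrtCoeff_mul_pow (x := |x|) (by rwa [abs_abs])).summable
    fun n => by simpa using abs_arcsinCoeff_mul_pow_le hx.le n

lemma hasDerivAt_arcsinCoeff_mul_pow (n : ℕ) (y : ℝ) :
    HasDerivAt (fun z => arcsinCoeff n * z ^ (2 * n + 1)) (invSqrtCoeff n * y ^ (2 * n)) y := by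
  refine ((hasDerivAt_pow (2 * n + 1) y).const_mul (arcsinCoeff n)).congr_deriv ?_
  rw [Nat.add_sub_cancel, arcsinCoeff]
  field_simp
  push_cast
  ring

theorem hasDerivAt_tsum_arcsinCoeff_mul_pow {y : ℝ} (hy : |y| < 1) :
    HasDerivAt (fun z => ∑' n, arcsinCoeff n * z ^ (2 * n + 1)) (1 / √(1 - y ^ 2)) y := by
  obtain ⟨R, hyR, hR1⟩ := exists_between hy
  have hR : |R| < 1 := by rwa [abs_of_pos ((abs_nonneg y).trans_lt hyR)]
  replace hyR : y ∈ Metric.ball 0 R := by rwa [mem_ball_zero_iff, norm_eq_abs]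
  rw [← (hasSum_invSqrtCoeff_mul_pow hy).tsum_eq]
  refine hasDerivAt_tsum_of_isPreconnected (hasSum_invSqrtCoeff_mul_pow hR).summable
    Metric.isOpen_ball (convex_ball 0 R).isPreconnected
    (fun n z _ => hasDerivAt_arcsinCoeff_mul_pow n z) (fun n z hz => ?_) hyR
    (summable_arcsinCoeff_mul_pow hy) hyR
  rw [mem_ball_zero_iff, norm_eq_abs] at hz
  exact abs_invSqrtCoeff_mul_pow_le hz.le n

theorem hasSum_arcsinCoeff_mul_pow {x : ℝ} (hx : |x| < 1) :
    HasSum (fun n => arcsinCoeff n * x ^ (2 * n + 1)) (arcsin x) := by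
  have hball {y : ℝ} : y ∈ Metric.ball (0 : ℝ) 1 ↔ |y| < 1 := by
    rw [mem_ball_zero_iff, norm_eq_abs]
  have hderiv {y : ℝ} (hy : y ∈ Metric.ball (0 : ℝ) 1) :=
    hasDerivAt_tsum_arcsinCoeff_mul_pow (hball.1 hy)
  have harcsin {y : ℝ} (hy : y ∈ Metric.ball (0 : ℝ) 1) : DifferentiableAt ℝ arcsin y := by
    rw [hball, abs_lt] at hy
    exact differentiableAt_arcsin.2 ⟨hy.1.ne', hy.2.ne⟩
  have heq := Metric.isOpen_ball.eqOn_of_deriv_eq (convex_ball (0 : ℝ) 1).isPreconnected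
    (fun y hy => (hderiv hy).differentiableAt.differentiableWithinAt)
    (fun y hy => (harcsin hy).differentiableWithinAt)
    (fun y hy => by rw [(hderiv hy).deriv, deriv_arcsin])
    (Metric.mem_ball_self one_pos) (by simp) (hball.2 hx)
  exact heq ▸ (summable_arcsinCoeff_mul_pow hx).hasSum

end Arcsin

noncomputable def biasedReluKernel (t : ℝ) : ℝ :=
  (t + 1) / (4 * π) * (π - arccos ((t + 1) / 2))

namespace biasedReluKernel

/-- `biasedReluKernel t = ∑ₙ coeff n * (t + 1) ^ degree n`: index `0` is the linear term
`(t + 1) / 8` coming from `π / 2`, index `n + 1` the `n`-th term of the `arcsin` series. -/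
noncomputable def coeff : ℕ → ℝ
  | 0 => 1 / 8
  | n + 1 => arcsinCoeff n / (2 ^ (2 * n + 1) * (4 * π))

def degree : ℕ → ℕ
  | 0 => 1
  | n + 1 => 2 * n + 2

noncomputable def taylorCoeff (k : ℕ) : ℝ := ∑' n, coeff n * (degree n).choose k

lemma coeff_pos (n : ℕ) : 0 < coeff n := by
  cases n with
  | zero => norm_num [coeff]
  | succ n => have := arcsinCoeff_pos n; unfold coeff; positivity

theorem hasSum_coeff_mul_pow {t : ℝ} (ht : |t| < 1) :
    HasSum (fun n => coeff n * (t + 1) ^ degree n) (biasedReluKernel t) := by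
  have hu : |(t + 1) / 2| < 1 := by
    rw [abs_lt] at ht ⊢; constructor <;> linarith
  have hodd : HasSum (fun n => coeff (n + 1) * (t + 1) ^ degree (n + 1))
      ((t + 1) / (4 * π) * arcsin ((t + 1) / 2)) :=
    ((hasSum_arcsinCoeff_mul_pow hu).mul_left _).congr_fun fun n => by
      simp only [coeff, degree, div_pow]
      field_simp
      ring
  have hK : biasedReluKernel t =
      coeff 0 * (t + 1) ^ degree 0 + (t + 1) / (4 * π) * arcsin ((t + 1) / 2) := by
    rw [biasedReluKernel, arccos_eq_pi_div_two_sub_arcsin, coeff, degree]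
    field_simp
    ring
  rw [hK]
  exact HasSum.zero_add (f := fun n => coeff n * (t + 1) ^ degree n) hodd

lemma summable_abs_coeff_mul_pow {s : ℝ} (hs : |s| < 1) :
    Summable fun n => |coeff n| * (s + 1) ^ degree n := by
  simpa only [abs_of_pos (coeff_pos _)] using (hasSum_coeff_mul_pow hs).summable

lemma taylorCoeff_pos (k : ℕ) : 0 < taylorCoeff k := by
  have hsum := summable_mul_choose one_half_pos
    (summable_abs_coeff_mul_pow (s := 1 / 2) (by norm_num)) k
  refine hsum.tsum_pos (fun n => by have := coeff_pos n; positivity) (k + 1) ?_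
  have hk : k ≤ degree (k + 1) := by simp only [degree]; omega
  have := coeff_pos (k + 1)
  have := Nat.choose_pos hk
  positivity

theorem hasSum_taylorCoeff_mul_pow {t : ℝ} (ht : |t| < 1) :
    Summable (fun k => |taylorCoeff k * t ^ k|) ∧
      HasSum (fun k => taylorCoeff k * t ^ k) (biasedReluKernel t) := by
  have := hasSum_tsum_mul_choose_mul_pow (summable_abs_coeff_mul_pow (s := |t|) (by rwa [abs_abs]))
  exact ⟨this.1, (hasSum_coeff_mul_pow ht).tsum_eq ▸ this.2⟩

end biasedReluKernel

open biasedReluKernel in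
theorem stmt15 :
    ∃ b : ℕ → ℝ, (∀ k, 0 < b k) ∧
      ∀ t : ℝ, |t| < 1 →
        Summable (fun k : ℕ => |b k * t ^ k|) ∧
        ((t + 1) / (4 * Real.pi)) * (Real.pi - Real.arccos ((t + 1) / 2)) =
          ∑' k : ℕ, b k * t ^ k := by
  refine ⟨taylorCoeff, taylorCoeff_pos, fun t ht => ?_⟩
  obtain ⟨habs, hsum⟩ := hasSum_taylorCoeff_mul_pow ht
  exact ⟨habs, hsum.tsum_eq.symm⟩
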